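/- arXiv:2107.09206 — 5 statements merged into one kernel-verified Lean document; each statement's English description precedes it below -/
import Mathlib

section
/- Let x₁,…,xₙ be integers, E ⊆ {1,…,n}, M = max(max_k |x_k|, n²), and define y_i = x_i if i ∈ E and y_i = 5M + i² otherwise. Then there exist i < j with j - i even and y_{(i+j)/2} = (y_i + y_j)/2 if and only if there exist i < j with j - i even, all three of i, (i+j)/2, j in E, and x_{(i+j)/2} = (x_i + x_j)/2. -/
/-- Deactivation: with M = max(max_k |x_k|, n²) and y_i = x_i for i ∈ E,
y_i = 5M + i² for i ∉ E, the sequence y has a double 3-term arithmetic progression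
iff x has one whose three indices all lie in E. -/
theorem restrict_midsum (n : ℕ) (x : ℕ → ℤ) (E : Finset ℕ) (hE : E ⊆ Finset.Icc 1 n)
    (M : ℤ)
    (hM : M = max ((((Finset.Icc 1 n).sup fun k => (x k).natAbs : ℕ) : ℤ)) ((n : ℤ) ^ 2))
    (y : ℕ → ℤ) (hy : ∀ i : ℕ, y i = if i ∈ E then x i else 5 * M + (i : ℤ) ^ 2) :
    (∃ i j : ℕ, 1 ≤ i ∧ i < j ∧ j ≤ n ∧ (j - i) % 2 = 0 ∧
        2 * y ((i + j) / 2) = y i + y j) ↔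
    (∃ i j : ℕ, 1 ≤ i ∧ i < j ∧ j ≤ n ∧ (j - i) % 2 = 0 ∧
        i ∈ E ∧ (i + j) / 2 ∈ E ∧ j ∈ E ∧
        2 * x ((i + j) / 2) = x i + x j) := by
  have hbound : ∀ k, k ∈ E → |x k| ≤ M := by
    intro k hkE
    have h1 : (x k).natAbs ≤ (Finset.Icc 1 n).sup fun k => (x k).natAbs :=
      Finset.le_sup (f := fun k => (x k).natAbs) (hE hkE)
    calc |x k| = ((x k).natAbs : ℤ) := (Int.abs_eq_natAbs _)
      _ ≤ (((Finset.Icc 1 n).sup fun k => (x k).natAbs : ℕ) : ℤ) := by exact_mod_cast h1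
      _ ≤ M := by rw [hM]; exact le_max_left _ _
  have hsq : ∀ k : ℕ, k ≤ n → (k : ℤ) ^ 2 ≤ M := by
    intro k hk
    have : (k : ℤ) ^ 2 ≤ (n : ℤ) ^ 2 := by
      have : (k : ℤ) ≤ n := by exact_mod_cast hk
      nlinarith [Int.ofNat_nonneg k]
    calc (k : ℤ) ^ 2 ≤ (n : ℤ) ^ 2 := this
      _ ≤ M := by rw [hM]; exact le_max_right _ _
  constructor
  · rintro ⟨i, j, hi, hij, hjn, hpar, heq⟩
    refine ⟨i, j, hi, hij, hjn, hpar, ?_⟩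
    set m := (i + j) / 2 with hm
    have h2m : 2 * m = i + j := by omega
    have hmi : 1 ≤ m := by omega
    have hmn : m ≤ n := by omega
    have hM4 : (4 : ℤ) ≤ M := by
      have hn2 : (2 : ℤ) ≤ (n : ℤ) := by exact_mod_cast (by omega : 2 ≤ n)
      have : (4 : ℤ) ≤ (n : ℤ) ^ 2 := by nlinarith
      calc (4 : ℤ) ≤ (n : ℤ) ^ 2 := this
        _ ≤ M := by rw [hM]; exact le_max_right _ _
    have hsi : (i : ℤ) ^ 2 ≤ M := hsq i (by omega)
    have hsj : (j : ℤ) ^ 2 ≤ M := hsq j hjn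
    have hsm : (m : ℤ) ^ 2 ≤ M := hsq m hmn
    have hii : (0 : ℤ) ≤ (i : ℤ) ^ 2 := sq_nonneg _
    have hjj : (0 : ℤ) ≤ (j : ℤ) ^ 2 := sq_nonneg _
    have hmm : (0 : ℤ) ≤ (m : ℤ) ^ 2 := sq_nonneg _
    rw [hy, hy, hy] at heq
    by_cases hiE : i ∈ E <;> by_cases hmE : m ∈ E <;> by_cases hjE : j ∈ E <;>
      simp only [hiE, hmE, hjE, if_true, if_false] at heq
    · exact ⟨hiE, hmE, hjE, heq⟩
    · have b1 := abs_le.mp (hbound i hiE)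
      have b2 := abs_le.mp (hbound m hmE)
      linarith [b1.1, b1.2, b2.1, b2.2]
    · have b1 := abs_le.mp (hbound i hiE)
      have b2 := abs_le.mp (hbound j hjE)
      linarith [b1.1, b1.2, b2.1, b2.2]
    · have b1 := abs_le.mp (hbound i hiE)
      linarith [b1.1, b1.2]
    · have b1 := abs_le.mp (hbound m hmE)
      have b2 := abs_le.mp (hbound j hjE)
      linarith [b1.1, b1.2, b2.1, b2.2]
    · have b1 := abs_le.mp (hbound m hmE)
      linarith [b1.1, b1.2]
    · have b1 := abs_le.mp (hbound j hjE)
      linarith [b1.1, b1.2]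
    · exfalso
      have h2m' : (2 : ℤ) * m = (i : ℤ) + j := by exact_mod_cast h2m
      have hij' : (i : ℤ) < j := by exact_mod_cast hij
      nlinarith [sq_nonneg ((i : ℤ) - j)]
  · rintro ⟨i, j, hi, hij, hjn, hpar, hiE, hmE, hjE, heq⟩
    refine ⟨i, j, hi, hij, hjn, hpar, ?_⟩
    rw [hy, hy, hy, if_pos hiE, if_pos hmE, if_pos hjE]
    exact heq
end

section
/- Let A = {a₁,…,a_t} ⊆ [1,m] be a progression-free set (containing no non-constant 3-term arithmetic progression), and let x⁽¹⁾,…,x⁽ᵗ⁾ be finite sequences of non-negative integers each bounded by B, with 2m > 2B. Define sequence y as the concatenation of the sequences 2m·x⁽ⁱ⁾ + aᵢ (each element of the i-th sequence multiplied by 2m, then increased by aᵢ). Then y contains a double 3-term arithmetic progression if and only if some x⁽ⁱ⁾ does. -/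
open List

/-- offset of block i -/
def off (L : List (List ℕ)) (i : ℕ) : ℕ := ((L.map List.length).take i).sum

lemma off_cons_succ (h : List ℕ) (t : List (List ℕ)) (i : ℕ) :
    off (h :: t) (i+1) = h.length + off t i := by
  simp [off, List.take_succ_cons]

lemma flatten_getD (L : List (List ℕ)) : ∀ i, ∀ hi : i < L.length, ∀ p, p < L[i].length →
    L.flatten.getD (off L i + p) 0 = L[i].getD p 0 := by
  induction L with
  | nil => intro i hi; simp at hi
  | cons h t ih =>
    intro i hi p hp
    cases i with
    | zero =>
      simp only [off, List.take_zero, List.sum_nil, Nat.zero_add, List.flatten_cons]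
      simp only [List.getElem_cons_zero] at hp ⊢
      rw [List.getD_eq_getElem _ _ (by simp; omega), List.getElem_append_left hp,
        List.getD_eq_getElem _ _ hp]
    | succ i =>
      simp only [List.length_cons, Nat.succ_lt_succ_iff] at hi
      simp only [List.getElem_cons_succ] at hp ⊢
      rw [off_cons_succ, List.flatten_cons, Nat.add_assoc,
        List.getD_append_right _ _ _ _ (Nat.le_add_right _ _), Nat.add_sub_cancel_left]
      exact ih i hi p hp

lemma flatten_index (L : List (List ℕ)) : ∀ n, n < L.flatten.length →
    ∃ i, ∃ hi : i < L.length, ∃ p, p < L[i].length ∧ n = off L i + p := by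
  induction L with
  | nil => intro n hn; simp at hn
  | cons h t ih =>
    intro n hn
    by_cases hc : n < h.length
    · exact ⟨0, by simp, n, by simpa using hc, by simp [off]⟩
    · push_neg at hc
      simp only [List.flatten_cons, List.length_append] at hn
      obtain ⟨i, hi, p, hp, hnp⟩ := ih (n - h.length) (by omega)
      exact ⟨i+1, by simpa using hi, p, by simpa using hp, by rw [off_cons_succ]; omega⟩

lemma off_add_len_le (L : List (List ℕ)) (i : ℕ) (hi : i < L.length) :
    off L i + L[i].length ≤ L.flatten.length := by
  rw [List.length_flatten]
  have h1 : (L.map List.length).sum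
      = ((L.map List.length).take i).sum + ((L.map List.length).drop i).sum := by
    rw [← List.sum_append, List.take_append_drop]
  have hi' : i < (L.map List.length).length := by simpa using hi
  have h2 : (L.map List.length).drop i
      = (L.map List.length)[i] :: (L.map List.length).drop (i+1) :=
    List.drop_eq_getElem_cons hi'
  simp only [off, h1, h2, List.sum_cons, List.getElem_map]
  omega

lemma key_split (M c d s1 s2 : ℕ) (h : M*c + s1 = M*d + s2)
    (h1 : 0 < s1) (h1' : s1 ≤ M) (h2 : 0 < s2) (h2' : s2 ≤ M) : c = d ∧ s1 = s2 := by
  rcases lt_trichotomy c d with hlt | heq | hgt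
  · obtain ⟨e, rfl⟩ : ∃ e, d = c + e + 1 := ⟨d - c - 1, by omega⟩
    have : M * (c + e + 1) = M*c + M*e + M := by ring
    rw [this] at h
    have : 0 ≤ M * e := Nat.zero_le _
    omega
  · constructor; exact heq; subst heq; omega
  · obtain ⟨e, rfl⟩ : ∃ e, c = d + e + 1 := ⟨c - d - 1, by omega⟩
    have : M * (d + e + 1) = M*d + M*e + M := by ring
    rw [this] at h
    have : 0 ≤ M * e := Nat.zero_le _
    omega

/-- A list of naturals contains a double 3-term arithmetic progression:
indices k < l with l - k even whose values form an arithmetic progression. -/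
def HasDAP (L : List ℕ) : Prop :=
  ∃ k l : ℕ, k < l ∧ l < L.length ∧ (l - k) % 2 = 0 ∧
    2 * L.getD ((k + l) / 2) 0 = L.getD k 0 + L.getD l 0

/-- Gluing: given a progression-free set {a₁,…,a_t} ⊆ [1,m] and sequences
x⁽¹⁾,…,x⁽ᵗ⁾ of non-negative integers bounded by B with 2m > 2B, the concatenation
of the sequences 2m·x⁽ⁱ⁾ + aᵢ contains a double 3-term arithmetic progression iff
some x⁽ⁱ⁾ does. -/
theorem glue_instances (t m B : ℕ) (a : Fin t → ℕ)
    (hmem : ∀ i, a i ∈ Finset.Icc 1 m)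
    (hinj : Function.Injective a)
    (hpf : ∀ i j k : Fin t, a i + a k = 2 * a j → a i = a j)
    (x : Fin t → List ℕ)
    (hB : ∀ i, ∀ v ∈ x i, v ≤ B)
    (hmB : 2 * B < 2 * m) :
    HasDAP ((List.ofFn fun i => (x i).map fun v => 2 * m * v + a i).flatten) ↔
      ∃ i, HasDAP (x i) := by
  set f : Fin t → List ℕ := fun i => (x i).map fun v => 2 * m * v + a i with hf
  set L : List (List ℕ) := List.ofFn f with hL
  have ha : ∀ i, 1 ≤ a i ∧ a i ≤ m := fun i => Finset.mem_Icc.mp (hmem i)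
  have hLlen : L.length = t := by simp [hL]
  have hgetL : ∀ i : Fin t, ∀ hi : (i : ℕ) < L.length, L[(i:ℕ)] = f i := by
    intro i hi
    have : (List.ofFn f)[(i:ℕ)]'(by simpa using hi) = f i := by
      rw [List.getElem_ofFn]
    exact this
  have hblen : ∀ i : Fin t, ∀ hi : (i : ℕ) < L.length, L[(i:ℕ)].length = (x i).length := by
    intro i hi; rw [hgetL i hi]; simp [hf]
  have hval_at : ∀ i : Fin t, ∀ hi : (i : ℕ) < L.length, ∀ p, p < (x i).length →
      L.flatten.getD (off L i + p) 0 = 2 * m * ((x i).getD p 0) + a i := by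
    intro i hi p hp
    rw [flatten_getD L i hi p (by rw [hblen i hi]; exact hp), hgetL i hi]
    simp only [hf]
    rw [List.getD_eq_getElem _ _ (by simpa using hp), List.getElem_map,
      List.getD_eq_getElem _ _ hp]
  constructor
  · rintro ⟨k, l, hkl, hlen, hev, hval⟩
    have hl2 : k + 2 ≤ l := by omega
    set q' : ℕ := (k + l) / 2 with hq'
    have hkq : k < q' := by omega
    have hql : q' < l := by omega
    -- decompose the three indices
    obtain ⟨i, hi, p, hp, hkp⟩ := flatten_index L k (by omega)
    obtain ⟨j, hj, q, hq, hmq⟩ := flatten_index L q' (by omega)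
    obtain ⟨h, hh, r, hr, hlr⟩ := flatten_index L l hlen
    set I : Fin t := ⟨i, by omega⟩ with hI
    set J : Fin t := ⟨j, by omega⟩ with hJ
    set H : Fin t := ⟨h, by omega⟩ with hH
    have hpI : p < (x I).length := by rw [← hblen I hi]; exact hp
    have hqJ : q < (x J).length := by rw [← hblen J hj]; exact hq
    have hrH : r < (x H).length := by rw [← hblen H hh]; exact hr
    rw [hkp] at hval
    rw [hmq] at hval
    rw [hlr] at hval
    rw [hval_at I hi p hpI, hval_at J hj q hqJ, hval_at H hh r hrH] at hval
    have e1 : 2 * (2 * m * ((x J).getD q 0) + a J)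
        = 2 * m * (2 * ((x J).getD q 0)) + 2 * a J := by ring
    have e2 : (2 * m * ((x I).getD p 0) + a I) + (2 * m * ((x H).getD r 0) + a H)
        = 2 * m * (((x I).getD p 0) + ((x H).getD r 0)) + (a I + a H) := by ring
    rw [e1, e2] at hval
    obtain ⟨hx2, ha2⟩ := key_split (2 * m) _ _ _ _ hval
      (by have := (ha J).1; omega) (by have := (ha J).2; omega)
      (by have := (ha I).1; have := (ha H).1; omega)
      (by have := (ha I).2; have := (ha H).2; omega)
    have hIJ : I = J := hinj (hpf I J H (by omega))
    have hHJ : H = J := hinj (by have h1 := hpf I J H (by omega); omega)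
    have hij : i = j := congrArg Fin.val hIJ
    have hhj : h = j := congrArg Fin.val hHJ
    subst hij
    subst hhj
    rw [hIJ, hHJ] at hx2
    have hpr : p < r := by omega
    have hq2 : q = (p + r) / 2 := by omega
    refine ⟨J, p, r, hpr, by rwa [hHJ] at hrH, by omega, ?_⟩
    rw [← hq2]
    exact hx2
  · rintro ⟨i, k, l, hkl, hlen, hev, hval⟩
    have hi : (i : ℕ) < L.length := by omega
    refine ⟨off L i + k, off L i + l, by omega, ?_, by omega, ?_⟩
    · have := off_add_len_le L i hi
      rw [hblen i hi] at this
      omega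
    · have hmid : (off L i + k + (off L i + l)) / 2 = off L i + (k + l) / 2 := by omega
      rw [hmid, hval_at i hi k (by omega), hval_at i hi l (by omega),
        hval_at i hi ((k+l)/2) (by omega)]
      set Xq := (x i).getD ((k+l)/2) 0
      set Xk := (x i).getD k 0
      set Xl := (x i).getD l 0
      calc 2 * (2 * m * Xq + a i) = 2 * m * (2 * Xq) + 2 * a i := by ring
        _ = 2 * m * (Xk + Xl) + 2 * a i := by rw [hval]
        _ = 2 * m * Xk + a i + (2 * m * Xl + a i) := by ring
end

section
/- Let P be an Abelian-square-free string of length t-2 over the alphabet {3,4,5,6}, and let U = 0·P·1·2·Pᴿ·0, a string of length 2t, where Pᴿ is the reverse of P. Then in the infinite periodic string U^m (m copies of U), every factor of even length 2ℓ centred between two consecutive letters 0 (i.e., at positions that are multiples of 2t) with 2ℓ ≢ 2t (mod 4t) is an Abelian square. -/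
/-- A string is an Abelian square. -/
def IsAbSquare {α : Type*} (W : List α) : Prop :=
  ∃ U V : List α, W = U ++ V ∧ U.length = V.length ∧ U.Perm V

/-- A string is Abelian-square-free: no non-empty factor is an Abelian square. -/
def AbSquareFree {α : Type*} (S : List α) : Prop :=
  ∀ V : List α, V ≠ [] → V.IsInfix S → ¬ IsAbSquare V

private lemma count_take_flatten_rep (U : List ℕ) (c : ℕ) (hU : 0 < U.length) :
    ∀ k m s : ℕ, s ≤ U.length → k * U.length + s ≤ m * U.length →
    (((List.replicate m U).flatten).take (k * U.length + s)).count c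
      = k * U.count c + (U.take s).count c := by
  intro k
  induction k with
  | zero =>
    intro m s hs hle
    rcases m with _ | n
    · have h0 : s = 0 := by omega
      simp [h0]
    · simp only [List.replicate_succ, List.flatten_cons, Nat.zero_mul, Nat.zero_add]
      rw [List.take_append]
      have h0 : s - U.length = 0 := by omega
      simp [h0]
  | succ k ih =>
    intro m s hs hle
    rcases m with _ | n
    · exfalso
      have h0 : (k + 1) * U.length = 0 := by omega
      rcases Nat.mul_eq_zero.mp h0 with h | h <;> omega
    · simp only [List.replicate_succ, List.flatten_cons]
      have harith : (k + 1) * U.length + s = U.length + (k * U.length + s) := by ring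
      rw [harith, List.take_append,
        List.take_of_length_le (by omega : U.length ≤ U.length + (k * U.length + s))]
      have h2 : U.length + (k * U.length + s) - U.length = k * U.length + s := by omega
      have hle' : k * U.length + s ≤ n * U.length := by
        have he1 : (k + 1) * U.length = k * U.length + U.length := by ring
        have he2 : (n + 1) * U.length = n * U.length + U.length := by ring
        rw [he1] at hle
        rw [he2] at hle
        omega
      rw [h2, List.count_append, ih n s hs hle']
      ring

private lemma count_take_mid (A B : List ℕ) (c s : ℕ) (hs : s ≠ A.length + 1) :
    (((A ++ ([1, 2] ++ B)).take s).count c) = (((A ++ ([2, 1] ++ B)).take s).count c) := by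
  simp only [List.take_append, List.count_append]
  have hlen : (([1, 2] : List ℕ)).length = ([2, 1] : List ℕ).length := by simp
  have hmid : ((([1, 2] : List ℕ)).take (s - A.length)).count c
      = ((([2, 1] : List ℕ)).take (s - A.length)).count c := by
    rcases h : s - A.length with _ | _ | u
    · simp
    · exfalso; omega
    · rw [List.take_of_length_le (by simp), List.take_of_length_le (by simp)]
      simp [List.count_cons, Nat.add_comm]
  rw [hmid]
  simp

private lemma count_take_eq_count_take_reverse (P : List ℕ) (t : ℕ) (ht : 2 ≤ t)
    (hlenP : P.length = t - 2) (c s : ℕ) (hst : s ≠ t) :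
    ((([0] ++ P ++ [1, 2] ++ P.reverse ++ [0]).take s).count c)
      = ((([0] ++ P ++ [1, 2] ++ P.reverse ++ [0]).reverse.take s).count c) := by
  have hrev : ([0] ++ P ++ [1, 2] ++ P.reverse ++ [0]).reverse
      = ([0] ++ P) ++ ([2, 1] ++ (P.reverse ++ [0])) := by
    simp [List.reverse_append]
  have h1 : ([0] ++ P ++ [1, 2] ++ P.reverse ++ [0] : List ℕ)
      = ([0] ++ P) ++ ([1, 2] ++ (P.reverse ++ [0])) := by simp
  rw [hrev, h1]
  apply count_take_mid
  simp [hlenP]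
  omega

/-- Let P be Abelian-square-free of length t-2 over {3,4,5,6} and
U = 0·P·1·2·Pᴿ·0. In U^m, every factor of even length 2ℓ centred between two
consecutive letters 0 (i.e., at a position that is a multiple of 2t), with
2ℓ ≢ 2t (mod 4t), is an Abelian square. -/
theorem centred_factors_are_absquares (t m ℓ r : ℕ) (P : List ℕ) (ht : 2 ≤ t)
    (hlenP : P.length = t - 2) (halph : ∀ c ∈ P, c ∈ ({3, 4, 5, 6} : Set ℕ))
    (hPsf : AbSquareFree P) (W : List ℕ)
    (hW : W = (List.replicate m ([0] ++ P ++ [1, 2] ++ P.reverse ++ [0])).flatten)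
    (hr : 2 * t ∣ r) (hl : 0 < ℓ) (h1 : ℓ ≤ r) (h2 : r + ℓ ≤ W.length)
    (hmod : (2 * ℓ) % (4 * t) ≠ 2 * t) :
    IsAbSquare ((W.drop (r - ℓ)).take (2 * ℓ)) := by
  classical
  set U : List ℕ := [0] ++ P ++ [1, 2] ++ P.reverse ++ [0] with hU
  have hLU : U.length = 2 * t := by simp [hU, hlenP]; omega
  have hWlen : W.length = m * (2 * t) := by
    rw [hW]; simp [List.length_flatten, hLU]
  obtain ⟨a, ha0⟩ := hr
  have ha : r = a * (2 * t) := by rw [ha0]; ring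
  set X : List ℕ := (W.drop (r - ℓ)).take ℓ with hX
  set Y : List ℕ := (W.drop r).take ℓ with hY
  refine ⟨X, Y, ?_, ?_, ?_⟩
  · have h2l : 2 * ℓ = ℓ + ℓ := by ring
    rw [h2l, List.take_add, hX, hY, List.drop_drop]
    have hrr : r - ℓ + ℓ = r := by omega
    rw [hrr]
  · rw [hX, hY]
    simp only [List.length_take, List.length_drop]
    omega
  · rw [List.perm_iff_count]
    intro c
    have hsplit1 : (W.take r).count c = (W.take (r - ℓ)).count c + X.count c := by
      have hrr : r - ℓ + ℓ = r := by omega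
      conv_lhs => rw [← hrr, List.take_add, List.count_append]
    have hsplit2 : (W.take (r + ℓ)).count c = (W.take r).count c + Y.count c := by
      rw [List.take_add, List.count_append]
    have hUpos : 0 < U.length := by omega
    have hcount := count_take_flatten_rep U c hUpos
    set q : ℕ := ℓ / (2 * t) with hq
    set s : ℕ := ℓ % (2 * t) with hs
    have hls : ℓ = q * (2 * t) + s := by
      rw [hq, hs, Nat.mul_comm]
      exact (Nat.div_add_mod ℓ (2 * t)).symm
    have hslt : s < 2 * t := Nat.mod_lt _ (by omega)
    have hsnet : s ≠ t := by
      intro h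
      apply hmod
      have h4 : 4 * t = 2 * (2 * t) := by ring
      rw [h4, Nat.mul_mod_mul_left, ← hs, h]
    -- value at r
    have hvr : (W.take r).count c = a * U.count c := by
      have hh := hcount a m 0 (by omega)
        (by rw [hLU]; have : a * (2 * t) + 0 = r := by omega
            rw [this]; omega)
      rw [hLU] at hh
      have harg : a * (2 * t) + 0 = r := by omega
      rw [harg] at hh
      rw [hW]
      simpa using hh
    -- value at r + ℓ
    have hvrl : (W.take (r + ℓ)).count c
        = (a + q) * U.count c + (U.take s).count c := by
      have hea : (a + q) * (2 * t) = a * (2 * t) + q * (2 * t) := by ring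
      have hh := hcount (a + q) m s (by omega)
        (by rw [hLU]; omega)
      rw [hLU] at hh
      have harg : (a + q) * (2 * t) + s = r + ℓ := by omega
      rw [harg] at hh
      rw [hW]
      exact hh
    -- key symmetry
    have hkey : (U.take s).count c + (U.take (2 * t - s)).count c = U.count c := by
      have hdt : (U.take (2 * t - s)).count c + (U.drop (2 * t - s)).count c
          = U.count c := by
        rw [← List.count_append, List.take_append_drop]
      have hdrop : (U.drop (2 * t - s)).count c = (U.reverse.take s).count c := by
        rw [List.take_reverse, List.count_reverse]
        congr 2
        omega
      have hsym := count_take_eq_count_take_reverse P t ht hlenP c s hsnet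
      rw [← hU] at hsym
      omega
    rcases Nat.eq_zero_or_pos s with hs0 | hspos
    · -- s = 0
      have haq : q ≤ a := by
        by_contra h
        push_neg at h
        have hmul : (a + 1) * (2 * t) ≤ q * (2 * t) :=
          Nat.mul_le_mul_right _ (by omega)
        have hexp : (a + 1) * (2 * t) = a * (2 * t) + 2 * t := by ring
        omega
      obtain ⟨b, hb⟩ : ∃ b, a = b + q := ⟨a - q, by omega⟩
      subst hb
      have heb : (b + q) * (2 * t) = b * (2 * t) + q * (2 * t) := by ring
      have hvrm : (W.take (r - ℓ)).count c = b * U.count c := by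
        have hh := hcount b m 0 (by omega) (by rw [hLU]; omega)
        rw [hLU] at hh
        have harg : b * (2 * t) + 0 = r - ℓ := by omega
        rw [harg] at hh
        rw [hW]
        simpa using hh
      have e1 : (b + q) * U.count c = b * U.count c + q * U.count c := by ring
      have e2 : (b + q + q) * U.count c
          = b * U.count c + q * U.count c + q * U.count c := by ring
      rw [e1] at hvr
      rw [e2] at hvrl
      have e3 : (U.take s).count c = 0 := by rw [hs0]; simp
      omega
    · -- s > 0
      have haq : q + 1 ≤ a := by
        by_contra h
        push_neg at h
        have hmul : a * (2 * t) ≤ q * (2 * t) :=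
          Nat.mul_le_mul_right _ (by omega)
        omega
      obtain ⟨b, hb⟩ : ∃ b, a = b + q + 1 := ⟨a - q - 1, by omega⟩
      subst hb
      have heb : (b + q + 1) * (2 * t) = b * (2 * t) + q * (2 * t) + 2 * t := by ring
      have hvrm : (W.take (r - ℓ)).count c
          = b * U.count c + (U.take (2 * t - s)).count c := by
        have hh := hcount b m (2 * t - s) (by omega) (by rw [hLU]; omega)
        rw [hLU] at hh
        have harg : b * (2 * t) + (2 * t - s) = r - ℓ := by omega
        rw [harg] at hh
        rw [hW]
        exact hh
      have e1 : (b + q + 1) * U.count c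
          = b * U.count c + q * U.count c + U.count c := by ring
      have e2 : (b + q + 1 + q) * U.count c
          = b * U.count c + q * U.count c + q * U.count c + U.count c := by ring
      rw [e1] at hvr
      rw [e2] at hvrl
      omega
end

section
/- Let P be an Abelian-square-free string of length t-2 over {3,4,5,6} and U = 0·P·1·2·Pᴿ·0. Then in U^m, a factor of length exactly 2t centred between two consecutive letters 0 is not an Abelian square (the letters 1 and 2 remain unmatched between the halves). -/
/-!
Cut `U = 0·P·1·2·Pᴿ·0` into its halves `A = 0·P·1` and `B = 2·Pᴿ·0`, both of length `t`.
The factor starts at a multiple of `t`, so it is `A·B` or `B·A`; its halves are `A` and `B`,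
and only `B` contains the letter `2`.
-/

theorem isAbSquare_append_iff {α : Type*} {A B : List α} (h : A.length = B.length) :
    IsAbSquare (A ++ B) ↔ A.Perm B := by
  constructor
  · rintro ⟨X, Y, hXY, hXY_len, hperm⟩
    have hX : A.length = X.length := by
      have := congrArg List.length hXY
      simp only [List.length_append] at this
      omega
    obtain ⟨rfl, rfl⟩ := List.append_inj hXY hX
    exact hperm
  · exact fun hperm => ⟨A, B, rfl, h, hperm⟩

theorem take_drop_mul_flatten_replicate_append_eq_or {α : Type*} {A B : List α} {t : ℕ}
    (hA : A.length = t) (hB : B.length = t) {m n : ℕ} (hn : n + 2 ≤ 2 * m) :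
    let F := ((List.replicate m (A ++ B)).flatten.drop (t * n)).take (2 * t)
    F = A ++ B ∨ F = B ++ A := by
  induction m generalizing n with
  | zero => omega
  | succ m ih =>
    simp only [List.replicate_succ, List.flatten_cons, List.append_assoc]
    match n with
    | 0 =>
      left
      rw [Nat.mul_zero, List.drop_zero, ← List.append_assoc,
        show 2 * t = (A ++ B).length by simp [hA, hB]; omega, List.take_left]
    | 1 =>
      right
      obtain ⟨m, rfl⟩ : ∃ m', m = m' + 1 := ⟨m - 1, by omega⟩
      rw [Nat.mul_one, ← hA, List.drop_left,
        show 2 * A.length = B.length + A.length by omega, List.take_length_add_append,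
        List.replicate_succ, List.flatten_cons, List.append_assoc, List.take_left]
    | n + 2 =>
      rw [show t * (n + 2) = A.length + (B.length + t * n) by rw [hA, hB]; ring,
        List.drop_length_add_append, List.drop_length_add_append]
      exact ih (by omega)

theorem centred_factor_length_2t_not_absquare_general (t m r : ℕ) (P : List ℕ) (ht : 2 ≤ t)
    (hlenP : P.length = t - 2) (halph : ∀ c ∈ P, c ∈ ({3, 4, 5, 6} : Set ℕ))
    (W : List ℕ)
    (hW : W = (List.replicate m ([0] ++ P ++ [1, 2] ++ P.reverse ++ [0])).flatten)
    (hr : 2 * t ∣ r) (h2 : r + t ≤ W.length) :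
    ¬ IsAbSquare ((W.drop (r - t)).take (2 * t)) := by
  obtain ⟨k, rfl⟩ := hr
  set A : List ℕ := [0] ++ P ++ [1]
  set B : List ℕ := [2] ++ P.reverse ++ [0]
  have hA : A.length = t := by simp [A, hlenP]; omega
  have hB : B.length = t := by simp [B, hlenP]; omega
  have hU : [0] ++ P ++ [1, 2] ++ P.reverse ++ [0] = A ++ B := by simp [A, B]
  have hstart : 2 * t * k - t = t * (2 * k - 1) := by rw [Nat.mul_sub_one]; ring_nf
  have hk : 2 * k - 1 + 2 ≤ 2 * m := by
    have hlen : t * (2 * k + 1) ≤ t * (2 * m) := by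
      simp only [hW, hU, List.length_flatten, List.map_replicate, List.sum_replicate, smul_eq_mul,
        List.length_append, hA, hB] at h2
      linarith
    have := Nat.le_of_mul_le_mul_left hlen (by omega)
    omega
  have hAB : ¬ A.Perm B := by
    have hP : P.count 2 = 0 := List.count_eq_zero.mpr fun h => by simpa using halph 2 h
    refine fun h => absurd (h.count_eq 2) ?_
    simp [A, B, List.count_append, List.count_reverse, hP]
  rw [hW, hU, hstart]
  rcases take_drop_mul_flatten_replicate_append_eq_or hA hB hk with hF | hF <;> rw [hF]
  · rwa [isAbSquare_append_iff (hA.trans hB.symm)]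
  · rw [isAbSquare_append_iff (hB.trans hA.symm)]
    exact fun h => hAB h.symm

/-- Let P be Abelian-square-free of length t-2 over {3,4,5,6} and
U = 0·P·1·2·Pᴿ·0. In U^m, a factor of length exactly 2t centred between two
consecutive letters 0 (at a position that is a multiple of 2t) is not an
Abelian square: the letters 1 and 2 remain unmatched between the halves. -/
theorem centred_factor_length_2t_not_absquare (t m r : ℕ) (P : List ℕ) (ht : 2 ≤ t)
    (hlenP : P.length = t - 2) (halph : ∀ c ∈ P, c ∈ ({3, 4, 5, 6} : Set ℕ))
    (hPsf : AbSquareFree P) (W : List ℕ)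
    (hW : W = (List.replicate m ([0] ++ P ++ [1, 2] ++ P.reverse ++ [0])).flatten)
    (hr : 2 * t ∣ r) (h1 : t ≤ r) (h2 : r + t ≤ W.length) :
    ¬ IsAbSquare ((W.drop (r - t)).take (2 * t)) :=
  centred_factor_length_2t_not_absquare_general t m r P ht hlenP halph W hW hr h2
end

section
/- Every Abelian square factor of the string shuffle_◇(X,Y) (with X, Y over disjoint alphabets not containing ◇) has length divisible by 3, and removing the X-letters, ◇-letters, and Y-letters respectively from it yields three strings of equal length. -/
/-- shuffle_◇(X,Y) = X[1]◇Y[1]X[2]◇Y[2]⋯ for equal-length X, Y. -/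
def shuffle {α : Type*} (d : α) (X Y : List α) : List α :=
  (List.zipWith (fun a b => [a, d, b]) X Y).flatten

open List

theorem IsAbSquare.map {α β : Type*} {W : List α} (f : α → β) (h : IsAbSquare W) :
    IsAbSquare (W.map f) := by
  obtain ⟨U, V, rfl, hlen, hperm⟩ := h
  exact ⟨U.map f, V.map f, map_append, by simp [hlen], hperm.map f⟩

theorem List.length_filter_eq_count_map {α β : Type*} [DecidableEq β] {l : List α}
    {q : α → Bool} {f : α → β} {b : β} (h : ∀ c ∈ l, q c ↔ f c = b) :
    (l.filter q).length = (l.map f).count b := by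
  rw [← countP_eq_length_filter, count_eq_countP, countP_map]
  exact countP_congr fun c hc => by simpa using h c hc

theorem List.count_add_eq_of_perm_map_add {G : Type*} [AddGroup G] [DecidableEq G] {l : List G}
    {c : G} (h : l ~ l.map (· + c)) (r : G) : l.count (r + c) = l.count r := by
  rw [h.count_eq, count_map_of_injective _ _ (add_left_injective c)]

theorem List.length_eq_mul_count_of_perm_map_add {p : ℕ} [Fact p.Prime] {l : List (ZMod p)}
    {c : ZMod p} (hc : c ≠ 0) (h : l ~ l.map (· + c)) (r : ZMod p) :
    l.length = p * l.count r := by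
  have hiter (k : ℕ) : ∀ s, l.count (s + k * c) = l.count s := by
    induction k with
    | zero => simp
    | succ k ih =>
      intro s
      rw [Nat.cast_succ, add_one_mul, ← add_assoc, count_add_eq_of_perm_map_add h, ih]
  have hconst (s : ZMod p) : l.count s = l.count r := by
    have hs : r + ((((s - r) * c⁻¹).val : ℕ) : ZMod p) * c = s := by
      rw [ZMod.natCast_zmod_val, mul_assoc, inv_mul_cancel₀ hc, mul_one, add_sub_cancel]
    rw [← hs, hiter]
  calc l.length = ∑ s : ZMod p, l.count s := by
        rw [← Multiset.coe_card, ← Multiset.sum_count_eq_card (s := Finset.univ) (by simp)]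
        simp only [Multiset.coe_count]
    _ = p * l.count r := by simp [hconst, ZMod.card]

def residueWord (p a n : ℕ) : List (ZMod p) :=
  (range' a n).map (↑)

section ResidueWord

variable {p : ℕ}

theorem residueWord_add (a m n : ℕ) :
    residueWord p a (m + n) = residueWord p a m ++ residueWord p (a + m) n := by
  rw [residueWord, residueWord, residueWord, ← map_append, ← range'_append, one_mul]

theorem residueWord_add_left (a k n : ℕ) :
    residueWord p (k + a) n = (residueWord p a n).map (· + (k : ZMod p)) := by
  rw [residueWord, residueWord, ← map_add_range', map_map, map_map]
  congr 1
  funext j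
  simp only [Function.comp_apply, Nat.cast_add]
  exact add_comm _ _

theorem exists_eq_residueWord_of_infix {a n : ℕ} {w : List (ZMod p)}
    (h : w <:+: residueWord p a n) : ∃ b, w = residueWord p b w.length := by
  obtain ⟨s, t, hst⟩ := h
  obtain ⟨l₁, l₂, hl, hsw, -⟩ := map_eq_append_iff.mp hst.symm
  obtain ⟨l₀, l, rfl, -, rfl⟩ := map_eq_append_iff.mp hsw
  obtain ⟨k, -, hk, -⟩ := range'_eq_append_iff.mp hl
  obtain ⟨j, -, -, rfl⟩ := range'_eq_append_iff.mp hk.symm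
  exact ⟨a + j * 1, by simp [residueWord]⟩

theorem residueWord_succ_perm_of_dvd {a n : ℕ} (hn : p ∣ n) :
    residueWord p (a + 1) n ~ residueWord p a n := by
  have hlast : ((a + n : ℕ) : ZMod p) = a := by
    rw [Nat.cast_add, (ZMod.natCast_eq_zero_iff n p).mpr hn, add_zero]
  have hone (b : ℕ) : residueWord p b 1 = [(b : ZMod p)] := by simp [residueWord]
  have hsplit := residueWord_add (p := p) a n 1
  rw [add_comm n 1, residueWord_add, hone, hone, hlast] at hsplit
  rw [← perm_append_right_iff [(a : ZMod p)], ← hsplit]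
  exact perm_append_comm

variable [Fact p.Prime]

theorem count_residueWord_of_dvd {a n : ℕ} (hn : p ∣ n) (r : ZMod p) :
    (residueWord p a n).count r = n / p := by
  have hshift : residueWord p a n ~ (residueWord p a n).map (· + 1) := by
    rw [← Nat.cast_one, ← residueWord_add_left, add_comm]
    exact (residueWord_succ_perm_of_dvd hn).symm
  have hlen := length_eq_mul_count_of_perm_map_add one_ne_zero hshift r
  rw [residueWord, length_map, length_range'] at hlen
  rw [eq_comm, Nat.div_eq_iff_eq_mul_left (Fact.out : p.Prime).pos hn, mul_comm]
  exact hlen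

theorem dvd_of_perm_residueWord {a n : ℕ} (h : residueWord p a n ~ residueWord p (a + n) n) :
    p ∣ n := by
  by_cases hn : (n : ZMod p) = 0
  · exact (ZMod.natCast_eq_zero_iff n p).mp hn
  · rw [add_comm, residueWord_add_left] at h
    have hlen := length_eq_mul_count_of_perm_map_add hn h 0
    rw [residueWord, length_map, length_range'] at hlen
    exact ⟨_, hlen⟩

theorem dvd_of_isAbSquare_residueWord {a n : ℕ} (h : IsAbSquare (residueWord p a n)) :
    p ∣ n := by
  obtain ⟨U, W, hUW, hlen, hperm⟩ := h
  have hn : n = U.length + U.length := by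
    simpa [residueWord, hlen] using congrArg length hUW
  rw [hn, residueWord_add] at hUW
  obtain ⟨hU, hW⟩ := append_inj hUW (by simp [residueWord])
  rw [← hU, ← hW] at hperm
  rw [hn, ← two_mul]
  exact dvd_mul_of_dvd_right (dvd_of_perm_residueWord hperm) 2

end ResidueWord

section Shuffle

variable {α : Type*}

theorem shuffle_cons (d x y : α) (X Y : List α) :
    shuffle d (x :: X) (y :: Y) = x :: d :: y :: shuffle d X Y := rfl

theorem mem_shuffle {d c : α} {X Y : List α} (h : c ∈ shuffle d X Y) :
    c ∈ X ∨ c = d ∨ c ∈ Y := by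
  induction X generalizing Y with
  | nil => simp [shuffle] at h
  | cons x X ih =>
    cases Y with
    | nil => simp [shuffle] at h
    | cons y Y =>
      rw [shuffle_cons] at h
      have := @ih Y
      simp only [mem_cons] at h this ⊢
      tauto

theorem residueWord_three_mul_succ (n : ℕ) :
    residueWord 3 0 (3 * (n + 1)) = 0 :: 1 :: 2 :: residueWord 3 0 (3 * n) := by
  have h := residueWord_add_left (p := 3) 0 3 (3 * n)
  rw [ZMod.natCast_self, add_zero] at h
  rw [mul_add, mul_one, add_comm, residueWord_add, zero_add, h, map_id'' add_zero]
  rfl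

theorem map_shuffle {d : α} {X Y : List α} {f : α → ZMod 3} (hX : ∀ a ∈ X, f a = 0)
    (hd : f d = 1) (hY : ∀ b ∈ Y, f b = 2) (hlen : X.length = Y.length) :
    (shuffle d X Y).map f = residueWord 3 0 (3 * X.length) := by
  induction X generalizing Y with
  | nil => obtain rfl := length_eq_zero_iff.mp hlen.symm; rfl
  | cons x X ih =>
    obtain ⟨y, Y, rfl⟩ := exists_cons_of_length_eq_add_one hlen.symm
    rw [shuffle_cons, length_cons, residueWord_three_mul_succ,
      ← ih (fun a ha => hX a (mem_cons_of_mem x ha)) (fun b hb => hY b (mem_cons_of_mem y hb))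
        (by simpa using hlen)]
    simp [hX x mem_cons_self, hd, hY y mem_cons_self]

variable [DecidableEq α]

def shuffleClass (X : List α) (d c : α) : ZMod 3 :=
  if c ∈ X then 0 else if c = d then 1 else 2

variable {X Y : List α} {d c : α}

theorem shuffleClass_eq_zero_iff : shuffleClass X d c = 0 ↔ c ∈ X := by
  unfold shuffleClass
  split_ifs <;> simp_all +decide

theorem shuffleClass_eq_one_iff (hdX : d ∉ X) : shuffleClass X d c = 1 ↔ c = d := by
  unfold shuffleClass
  split_ifs with hcX <;> simp_all +decide
  exact fun h => hdX (h ▸ hcX)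

theorem shuffleClass_of_mem_right (hdisj : ∀ a ∈ X, ∀ b ∈ Y, a ≠ b) (hdY : d ∉ Y) (hc : c ∈ Y) :
    shuffleClass X d c = 2 := by
  have hcX : c ∉ X := fun h => hdisj c h c hc rfl
  have hcd : c ≠ d := fun h => hdY (h ▸ hc)
  simp [shuffleClass, hcX, hcd]

theorem shuffleClass_eq_two_iff (hdisj : ∀ a ∈ X, ∀ b ∈ Y, a ≠ b) (hdY : d ∉ Y)
    (hc : c ∈ shuffle d X Y) : shuffleClass X d c = 2 ↔ c ∈ Y := by
  refine ⟨fun h => ?_, shuffleClass_of_mem_right hdisj hdY⟩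
  unfold shuffleClass at h
  split_ifs at h with hcX hcd
  · exact absurd h (by decide)
  · exact absurd h (by decide)
  · exact ((mem_shuffle hc).resolve_left hcX).resolve_left hcd

theorem map_shuffleClass_shuffle (hlen : X.length = Y.length) (hdisj : ∀ a ∈ X, ∀ b ∈ Y, a ≠ b)
    (hdX : d ∉ X) (hdY : d ∉ Y) :
    (shuffle d X Y).map (shuffleClass X d) = residueWord 3 0 (3 * X.length) :=
  map_shuffle (fun _ => shuffleClass_eq_zero_iff.mpr) ((shuffleClass_eq_one_iff hdX).mpr rfl)
    (fun _ => shuffleClass_of_mem_right hdisj hdY) hlen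

end Shuffle

/-- Every Abelian-square factor of shuffle_◇(X,Y) (X, Y over disjoint alphabets
avoiding ◇) has length divisible by 3, and its X-letters, ◇-letters and Y-letters
form three strings of equal length. -/
theorem shuffle_absquare_length {α : Type*} [DecidableEq α] (d : α) (X Y V : List α)
    (hlen : X.length = Y.length)
    (hdisj : ∀ a ∈ X, ∀ b ∈ Y, a ≠ b) (hdX : d ∉ X) (hdY : d ∉ Y)
    (hV : V.IsInfix (shuffle d X Y)) (hsq : IsAbSquare V) :
    3 ∣ V.length ∧
    (V.filter fun c => decide (c ∈ X)).length = (V.filter fun c => decide (c = d)).length ∧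
    (V.filter fun c => decide (c ∈ Y)).length = (V.filter fun c => decide (c = d)).length := by
  set κ := shuffleClass X d
  obtain ⟨a, ha⟩ :=
    exists_eq_residueWord_of_infix (map_shuffleClass_shuffle hlen hdisj hdX hdY ▸ hV.map κ)
  have h3 : 3 ∣ V.length := by
    rw [← length_map κ]
    exact dvd_of_isAbSquare_residueWord (ha ▸ hsq.map κ)
  have hcount (r : ZMod 3) : (V.map κ).count r = V.length / 3 := by
    rw [ha, length_map, count_residueWord_of_dvd h3]
  have hd : (V.filter fun c => decide (c = d)).length = V.length / 3 := by
    rw [← hcount 1]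
    exact length_filter_eq_count_map fun c _ => by simp [κ, shuffleClass_eq_one_iff hdX]
  refine ⟨h3, ?_, ?_⟩
  · rw [hd, ← hcount 0]
    exact length_filter_eq_count_map fun c _ => by simp [κ, shuffleClass_eq_zero_iff]
  · rw [hd, ← hcount 2]
    exact length_filter_eq_count_map fun c hc => by
      simp [κ, shuffleClass_eq_two_iff hdisj hdY (hV.subset hc)]
end
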